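/- arXiv:1404.5534 — 4 statements merged into one kernel-verified Lean document; each statement's English description precedes it below -/
import Mathlib

section
/- For independent nonnegative random variables W, A, B where B is exponentially distributed with rate μ and W, A have Laplace transforms ω(s) = E[e^{-sW}] and α(s) = E[e^{-sA}], the random variable max(0, B - A - W) has Laplace transform 1 - ω(μ)α(μ)(1 - μ/(μ+s)), i.e., E[e^{-s·max(0, B-A-W)}] = 1 - ω(μ)α(μ)·s/(μ+s) for all s ≥ 0. -/
/-!
Put `T = A + W`. Conditionally on `T = t ≥ 0`, the exponential variable `B` satisfies
`E[e^{-s (B - t)⁺}] = P(B ≤ t) + E[e^{-s (B - t)}; B > t] = 1 - e^{-μt} + e^{-μt} μ/(μ+s)`,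
that is `1 - s/(μ+s) · e^{-μt}`. Averaging over the law of `T`, which is independent of `B`,
turns `e^{-μt}` into `E[e^{-μT}] = ω(μ) α(μ)`.
-/

open MeasureTheory ProbabilityTheory Real Set

lemma norm_exp_neg_mul_le_one {s x : ℝ} (hs : 0 ≤ s) (hx : 0 ≤ x) :
    ‖exp (-s * x)‖ ≤ 1 := by
  rw [norm_of_nonneg (exp_pos _).le, exp_le_one_iff, neg_mul, neg_nonpos]
  exact mul_nonneg hs hx

lemma setIntegral_expMeasure_of_subset_Ici {r : ℝ} (hr : 0 ≤ r) {S : Set ℝ}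
    (hS : MeasurableSet S) (hS0 : S ⊆ Ici 0) (g : ℝ → ℝ) :
    ∫ x in S, g x ∂expMeasure r = ∫ x in S, r * exp (-(r * x)) * g x := by
  rw [expMeasure, gammaMeasure, restrict_withDensity hS]
  unfold gammaPDF ENNReal.ofReal
  rw [integral_withDensity_eq_integral_smul (measurable_gammaPDFReal 1 r).real_toNNReal]
  refine setIntegral_congr_fun hS fun x hx => ?_
  have hpdf : gammaPDFReal 1 r x = r * exp (-(r * x)) := by
    simp [gammaPDFReal, show (0 : ℝ) ≤ x from hS0 hx]
  rw [NNReal.smul_def, hpdf, Real.coe_toNNReal _ (by positivity), smul_eq_mul]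

lemma integral_exp_neg_mul_max_zero_sub_expMeasure {μ s t : ℝ} (hμ : 0 < μ) (hs : 0 ≤ s)
    (ht : 0 ≤ t) :
    ∫ b, exp (-s * max 0 (b - t)) ∂expMeasure μ = 1 - s / (μ + s) * exp (-(μ * t)) := by
  have := isProbabilityMeasure_expMeasure hμ
  have hint : Integrable (fun b => exp (-s * max 0 (b - t))) (expMeasure μ) :=
    .of_bound (by fun_prop) 1 (ae_of_all _ fun _ => norm_exp_neg_mul_le_one hs (le_max_left _ _))
  have below : ∫ b in Iic t, exp (-s * max 0 (b - t)) ∂expMeasure μ = 1 - exp (-(μ * t)) := by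
    rw [setIntegral_congr_fun measurableSet_Iic (g := fun _ => (1 : ℝ))
        fun b hb => by simp [max_eq_left (sub_nonpos.2 (mem_Iic.1 hb))],
      setIntegral_const, smul_eq_mul, mul_one, ← cdf_eq_real, cdf_expMeasure_eq hμ, if_pos ht]
  have above : ∫ b in Ioi t, exp (-s * max 0 (b - t)) ∂expMeasure μ =
      μ / (μ + s) * exp (-(μ * t)) := by
    rw [setIntegral_expMeasure_of_subset_Ici hμ.le measurableSet_Ioi
        (Ioi_subset_Ici_self.trans (Ici_subset_Ici.2 ht)),
      setIntegral_congr_fun measurableSet_Ioi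
        (g := fun b => μ * exp (s * t) * exp (-(μ + s) * b)) fun b hb => by
          simp only [max_eq_right (sub_nonneg.2 (mem_Ioi.1 hb).le), mul_assoc, ← exp_add]
          ring_nf,
      integral_const_mul, integral_exp_mul_Ioi (by linarith)]
    have hμs : μ + s ≠ 0 := by positivity
    field_simp
    rw [← exp_add]
    ring_nf
  rw [← integral_add_compl measurableSet_Iic hint, compl_Iic, below, above]
  field_simp
  ring

namespace ProbabilityTheory

lemma IndepFun.integral_comp_prodMk {Ω α β E : Type*} [MeasurableSpace Ω] [MeasurableSpace α]
    [MeasurableSpace β] [NormedAddCommGroup E] [NormedSpace ℝ E] {P : Measure Ω}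
    [IsFiniteMeasure P] {X : Ω → α} {Y : Ω → β} (hXY : IndepFun X Y P) (hX : Measurable X)
    (hY : Measurable Y) {F : α × β → E} (hF : Integrable F ((P.map X).prod (P.map Y))) :
    ∫ ω, F (X ω, Y ω) ∂P = ∫ ω, ∫ y, F (X ω, y) ∂P.map Y ∂P := by
  have hlaw := (indepFun_iff_map_prod_eq_prod_map_map hX.aemeasurable hY.aemeasurable).1 hXY
  rw [← integral_map (hX.prodMk hY).aemeasurable (hlaw ▸ hF.aestronglyMeasurable), hlaw,
    integral_prod F hF, integral_map hX.aemeasurable hF.integral_prod_left.aestronglyMeasurable]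

lemma IndepFun.integral_exp_neg_mul_max_zero_sub {Ω : Type*} [MeasurableSpace Ω]
    {P : Measure Ω} [IsProbabilityMeasure P] {T B : Ω → ℝ} (hTB : IndepFun T B P)
    (hT : Measurable T) (hB : Measurable B) (hTnn : ∀ ω, 0 ≤ T ω) {μ : ℝ} (hμ : 0 < μ)
    (hlaw : P.map B = expMeasure μ) {s : ℝ} (hs : 0 ≤ s) :
    ∫ ω, exp (-s * max 0 (B ω - T ω)) ∂P = 1 - s / (μ + s) * mgf T P (-μ) := by
  have hF : Integrable (fun p : ℝ × ℝ => exp (-s * max 0 (p.2 - p.1)))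
      ((P.map T).prod (P.map B)) :=
    .of_bound (by fun_prop) 1 (ae_of_all _ fun _ => norm_exp_neg_mul_le_one hs (le_max_left _ _))
  have hexp : Integrable (fun ω => exp (-μ * T ω)) P :=
    .of_bound (by fun_prop) 1 (ae_of_all _ fun ω => norm_exp_neg_mul_le_one hμ.le (hTnn ω))
  have hinner : ∀ ω, ∫ b, exp (-s * max 0 (b - T ω)) ∂P.map B =
      1 - s / (μ + s) * exp (-μ * T ω) := fun ω => by
    rw [hlaw, integral_exp_neg_mul_max_zero_sub_expMeasure hμ hs (hTnn ω), neg_mul]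
  rw [hTB.integral_comp_prodMk hT hB hF, integral_congr_ae (ae_of_all _ hinner),
    integral_sub (integrable_const 1) (hexp.const_mul _), integral_const_mul, mgf]
  simp

end ProbabilityTheory

theorem alternating_service_transform_exponential_general
    {Ω : Type*} [MeasurableSpace Ω] (P : Measure Ω) [IsProbabilityMeasure P]
    (W A B : Ω → ℝ) (hWm : Measurable W) (hAm : Measurable A) (hBm : Measurable B)
    (hWnn : ∀ ω, 0 ≤ W ω) (hAnn : ∀ ω, 0 ≤ A ω)
    (μ : ℝ) (hμ : 0 < μ)
    (hindep : iIndepFun ![W, A, B] P)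
    (hB : Measure.map B P = expMeasure μ) :
    ∀ s : ℝ, 0 ≤ s →
      ∫ ω, Real.exp (-s * max 0 (B ω - A ω - W ω)) ∂P =
        1 - (∫ ω, Real.exp (-μ * W ω) ∂P) * (∫ ω, Real.exp (-μ * A ω) ∂P) * s / (μ + s) := by
  intro s hs
  have hmeas : ∀ i, Measurable (![W, A, B] i) := by
    intro i; fin_cases i <;> assumption
  have hAW_B : IndepFun (A + W) B P :=
    hindep.indepFun_add_left hmeas 1 0 2 (by decide) (by decide)
  have hAW : IndepFun A W P := hindep.indepFun (i := 1) (j := 0) (by decide)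
  calc ∫ ω, exp (-s * max 0 (B ω - A ω - W ω)) ∂P
      = ∫ ω, exp (-s * max 0 (B ω - (A + W) ω)) ∂P := by simp_rw [Pi.add_apply, sub_sub]
    _ = 1 - s / (μ + s) * mgf (A + W) P (-μ) :=
      hAW_B.integral_exp_neg_mul_max_zero_sub (hAm.add hWm) hBm
        (fun ω => add_nonneg (hAnn ω) (hWnn ω)) hμ hB hs
    _ = _ := by
      rw [hAW.mgf_add' hAm.aestronglyMeasurable hWm.aestronglyMeasurable, mgf, mgf]
      ring

/-- For independent nonnegative random variables `W, A, B` with `B ~ Exp(μ)`,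
the Laplace transform of `max 0 (B - A - W)` equals
`1 - ω(μ)·α(μ)·s/(μ+s)` for all `s ≥ 0`. -/
theorem alternating_service_transform_exponential
    {Ω : Type*} [MeasurableSpace Ω] (P : Measure Ω) [IsProbabilityMeasure P]
    (W A B : Ω → ℝ) (hWm : Measurable W) (hAm : Measurable A) (hBm : Measurable B)
    (hWnn : ∀ ω, 0 ≤ W ω) (hAnn : ∀ ω, 0 ≤ A ω) (hBnn : ∀ ω, 0 ≤ B ω)
    (μ : ℝ) (hμ : 0 < μ)
    (hindep : iIndepFun ![W, A, B] P)
    (hB : Measure.map B P = expMeasure μ) :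
    ∀ s : ℝ, 0 ≤ s →
      ∫ ω, Real.exp (-s * max 0 (B ω - A ω - W ω)) ∂P =
        1 - (∫ ω, Real.exp (-μ * W ω) ∂P) * (∫ ω, Real.exp (-μ * A ω) ∂P) * s / (μ + s) :=
  alternating_service_transform_exponential_general P W A B hWm hAm hBm hWnn hAnn μ hμ hindep hB
end

section
/- Let B have an Erlang-n distribution with rate μ (sum of n i.i.d. Exp(μ) variables), independent of nonnegative random variables W and A which are independent of each other. Set φ(s) = E[e^{-sW}]·E[e^{-sA}]. Then P[B < W + A] = 1 - Σ_{i=0}^{n-1} ((-μ)^i / i!)·φ^{(i)}(μ). -/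
/-!
Since `B` is independent of `Y = W + A`, `P[B < Y] = E[F(Y)]` for the Erlang distribution
function `F(t) = 1 - ∑_{i<n} (μt)^i/i! · e^{-μt}`, obtained from the density by the fundamental
theorem of calculus. By independence `φ` is the moment generating function of `-Y`, whose `i`-th
derivative at `μ > 0` is `E[(-Y)^i e^{-μY}]`; hence
`E[(μY)^i/i! · e^{-μY}] = (-μ)^i/i! · φ^{(i)}(μ)`.
-/

open MeasureTheory ProbabilityTheory Real Finset Set
open scoped Nat

lemma hasDerivAt_sum_pow_div_factorial_mul_exp_neg (m : ℕ) (x : ℝ) :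
    HasDerivAt (fun x => ∑ i ∈ range (m + 1), x ^ i / i ! * exp (-x))
      (-(x ^ m / m ! * exp (-x))) x := by
  have hexp : HasDerivAt (fun x => exp (-x)) (-exp (-x)) x := by
    simpa using (hasDerivAt_neg x).exp
  induction m with
  | zero => simpa using hexp
  | succ m ih =>
    have hpow : HasDerivAt (fun x : ℝ => x ^ (m + 1) / (m + 1)!) (x ^ m / m !) x := by
      refine ((hasDerivAt_pow (m + 1) x).div_const _).congr_deriv ?_
      push_cast [Nat.factorial_succ]
      field_simp
    simp_rw [sum_range_succ _ (m + 1)]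
    exact (ih.fun_add (hpow.fun_mul hexp)).congr_deriv (by ring)

lemma integral_pow_div_factorial_mul_exp_neg_mul (m : ℕ) (r t : ℝ) :
    ∫ x in 0..t, r ^ (m + 1) * x ^ m / m ! * exp (-(r * x)) =
      1 - ∑ i ∈ range (m + 1), (r * t) ^ i / i ! * exp (-(r * t)) := by
  have hF : ∀ x,
      HasDerivAt (fun x => -∑ i ∈ range (m + 1), (r * x) ^ i / i ! * exp (-(r * x)))
      (r ^ (m + 1) * x ^ m / m ! * exp (-(r * x))) x := fun x =>
    ((hasDerivAt_sum_pow_div_factorial_mul_exp_neg m (r * x)).comp x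
      ((hasDerivAt_id x).const_mul r)).neg.congr_deriv (by ring)
  have hF0 : ∑ i ∈ range (m + 1), (r * 0) ^ i / i ! * exp (-(r * 0)) = 1 := by
    simp [sum_range_succ']
  rw [intervalIntegral.integral_eq_sub_of_hasDerivAt (fun x _ => hF x)
    (by apply Continuous.intervalIntegrable; fun_prop), hF0]
  ring

lemma gammaPDFReal_natCast_succ (m : ℕ) (r : ℝ) {x : ℝ} (hx : 0 ≤ x) :
    gammaPDFReal (m + 1 : ℕ) r x = r ^ (m + 1) * x ^ m / m ! * exp (-(r * x)) := by
  rw [gammaPDFReal, if_pos hx, Nat.cast_succ, Gamma_nat_eq_factorial, add_sub_cancel_right,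
    ← Nat.cast_succ, rpow_natCast, rpow_natCast, Nat.succ_eq_add_one]
  ring

lemma measureReal_gammaMeasure_Iio {a r : ℝ} (ha : 0 < a) (hr : 0 < r) (t : ℝ) :
    (gammaMeasure a r).real (Iio t) = ∫ x in Iio t, gammaPDFReal a r x := by
  rw [measureReal_def, gammaMeasure, withDensity_apply _ measurableSet_Iio,
    integral_eq_lintegral_of_nonneg_ae (ae_of_all _ (gammaPDFReal_nonneg ha hr))
      (measurable_gammaPDFReal a r).aestronglyMeasurable]
  rfl

lemma measureReal_gammaMeasure_natCast_Iio {n : ℕ} (hn : 0 < n) {r t : ℝ} (hr : 0 < r)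
    (ht : 0 ≤ t) :
    (gammaMeasure n r).real (Iio t) =
      1 - ∑ i ∈ range n, (r * t) ^ i / i ! * exp (-(r * t)) := by
  obtain ⟨m, rfl⟩ := Nat.exists_eq_add_one_of_ne_zero hn.ne'
  have hsupp : (Iio t).indicator (gammaPDFReal (m + 1 : ℕ) r) =
      (Ico 0 t).indicator fun x => r ^ (m + 1) * x ^ m / m ! * exp (-(r * x)) := by
    ext x
    by_cases hx : 0 ≤ x
    · have hmem : x ∈ Iio t ↔ x ∈ Ico 0 t := by simp [hx]
      simp only [indicator_apply, hmem, gammaPDFReal_natCast_succ m r hx]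
    · simp [indicator, hx, gammaPDFReal]
  rw [measureReal_gammaMeasure_Iio (by positivity) hr, ← integral_indicator measurableSet_Iio,
    hsupp, integral_indicator measurableSet_Ico, integral_Ico_eq_integral_Ioo,
    ← integral_Ioc_eq_integral_Ioo, ← intervalIntegral.integral_of_le ht,
    integral_pow_div_factorial_mul_exp_neg_mul]

lemma ProbabilityTheory.IndepFun.measureReal_lt_eq_integral {Ω : Type*} [MeasurableSpace Ω]
    {P : Measure Ω} [IsFiniteMeasure P] {X Y : Ω → ℝ} (hXY : IndepFun X Y P)
    (hX : AEMeasurable X P) (hY : AEMeasurable Y P) :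
    P.real {ω | X ω < Y ω} = ∫ ω, (P.map X).real (Iio (Y ω)) ∂P := by
  have hlt : MeasurableSet {p : ℝ × ℝ | p.1 < p.2} :=
    measurableSet_lt measurable_fst measurable_snd
  have hIio : Measurable fun y => P.map X (Iio y) :=
    Monotone.measurable fun _ _ hyz => measure_mono (Iio_subset_Iio hyz)
  have hlintegral : P {ω | X ω < Y ω} = ∫⁻ ω, P.map X (Iio (Y ω)) ∂P :=
    calc P {ω | X ω < Y ω}
        = P.map (fun ω => (X ω, Y ω)) {p | p.1 < p.2} :=
          (Measure.map_apply_of_aemeasurable (hX.prodMk hY) hlt).symm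
      _ = ((P.map X).prod (P.map Y)) {p | p.1 < p.2} := by
          rw [(indepFun_iff_map_prod_eq_prod_map_map hX hY).mp hXY]
      _ = ∫⁻ y, P.map X (Iio y) ∂(P.map Y) := Measure.prod_apply_symm hlt
      _ = ∫⁻ ω, P.map X (Iio (Y ω)) ∂P := lintegral_map' hIio.aemeasurable hY
  rw [measureReal_def, hlintegral]
  exact (integral_toReal (hIio.comp_aemeasurable hY)
    (ae_of_all _ fun _ => measure_lt_top _ _)).symm

lemma Ici_zero_subset_integrableExpSet_of_nonpos {Ω : Type*} [MeasurableSpace Ω]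
    {μ : Measure Ω} [IsFiniteMeasure μ] {X : Ω → ℝ} (hX : AEMeasurable X μ)
    (hX0 : ∀ᵐ ω ∂μ, X ω ≤ 0) :
    Set.Ici 0 ⊆ integrableExpSet X μ := by
  intro t (ht : 0 ≤ t)
  refine (integrable_const 1).mono' (by fun_prop) ?_
  filter_upwards [hX0] with ω hω
  rw [norm_of_nonneg (exp_nonneg _), exp_le_one_iff]
  exact mul_nonpos_of_nonneg_of_nonpos ht hω

lemma integral_measureReal_gammaMeasure_natCast_Iio {Ω : Type*} [MeasurableSpace Ω]
    {P : Measure Ω} [IsProbabilityMeasure P] {Y : Ω → ℝ} (hY : AEMeasurable Y P)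
    (hY0 : ∀ᵐ ω ∂P, 0 ≤ Y ω) {n : ℕ} (hn : 0 < n) {r : ℝ} (hr : 0 < r) :
    ∫ ω, (gammaMeasure n r).real (Iio (Y ω)) ∂P =
      1 - ∑ i ∈ range n, (-r) ^ i / i ! * iteratedDeriv i (mgf (-Y) P) r := by
  have hr_int : r ∈ interior (integrableExpSet (-Y) P) := by
    refine interior_mono (Ici_zero_subset_integrableExpSet_of_nonpos hY.neg ?_) ?_
    · filter_upwards [hY0] with ω hω using neg_nonpos.mpr hω
    · rwa [interior_Ici]
  have hterm : ∀ (i : ℕ) (y : ℝ),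
      (r * y) ^ i / i ! * exp (-(r * y)) = (-r) ^ i / i ! * ((-y) ^ i * exp (r * -y)) := by
    intro i y
    have hpow : (-r) ^ i * (-y) ^ i = (r * y) ^ i := by rw [← mul_pow, neg_mul_neg]
    rw [mul_neg, ← hpow]
    ring
  have hint : ∀ i : ℕ, Integrable (fun ω => (r * Y ω) ^ i / i ! * exp (-(r * Y ω))) P := by
    intro i
    simp_rw [hterm]
    exact (integrable_pow_mul_exp_of_mem_interior_integrableExpSet hr_int i).const_mul _
  calc ∫ ω, (gammaMeasure n r).real (Iio (Y ω)) ∂P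
      = ∫ ω, 1 - ∑ i ∈ range n, (r * Y ω) ^ i / i ! * exp (-(r * Y ω)) ∂P := by
        refine integral_congr_ae ?_
        filter_upwards [hY0] with ω hω using measureReal_gammaMeasure_natCast_Iio hn hr hω
    _ = 1 - ∑ i ∈ range n, ∫ ω, (r * Y ω) ^ i / i ! * exp (-(r * Y ω)) ∂P := by
        rw [integral_sub (integrable_const 1) (integrable_finsetSum _ fun i _ => hint i),
          integral_finsetSum _ fun i _ => hint i, integral_const, probReal_univ, one_smul]
    _ = 1 - ∑ i ∈ range n, (-r) ^ i / i ! * iteratedDeriv i (mgf (-Y) P) r := by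
        congr 1
        refine sum_congr rfl fun i _ => ?_
        rw [iteratedDeriv_mgf hr_int, ← integral_const_mul]
        simp_rw [hterm, Pi.neg_apply]

/-- If `B ~ Erlang(n, μ)` (i.e. Gamma with integer shape `n` and rate `μ`) is independent of
the independent nonnegative random variables `W` and `A`, and
`φ(s) = E[e^{-sW}]·E[e^{-sA}]`, then `P[B < W + A] = 1 - ∑_{i=0}^{n-1} ((-μ)^i/i!)·φ^{(i)}(μ)`. -/
theorem prob_no_wait_erlang
    {Ω : Type*} [MeasurableSpace Ω] (P : Measure Ω) [IsProbabilityMeasure P]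
    (W A B : Ω → ℝ) (hWm : Measurable W) (hAm : Measurable A) (hBm : Measurable B)
    (hWnn : ∀ ω, 0 ≤ W ω) (hAnn : ∀ ω, 0 ≤ A ω)
    (n : ℕ) (hn : 1 ≤ n) (μ : ℝ) (hμ : 0 < μ)
    (hindep : iIndepFun ![W, A, B] P)
    (hB : Measure.map B P = gammaMeasure n μ) :
    (P {ω | B ω < W ω + A ω}).toReal =
      1 - ∑ i ∈ Finset.range n, (-μ) ^ i / (Nat.factorial i) *
        iteratedDeriv i
          (fun s => (∫ ω, Real.exp (-s * W ω) ∂P) * ∫ ω, Real.exp (-s * A ω) ∂P) μ := by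
  have hWA : IndepFun W A P := hindep.indepFun (show (0 : Fin 3) ≠ 1 by decide)
  have hBWA : IndepFun B (W + A) P := by
    have hmeas : ∀ i, Measurable (![W, A, B] i) := fun i => by fin_cases i <;> assumption
    exact ((hindep.indepFun_prodMk hmeas 0 1 2 (by decide) (by decide)).comp
      (measurable_fst.add measurable_snd) measurable_id).symm
  have hφ : (fun s => (∫ ω, exp (-s * W ω) ∂P) * ∫ ω, exp (-s * A ω) ∂P) =
      mgf (-(W + A)) P := by
    funext s
    rw [neg_add, hWA.neg_left.neg_right.mgf_add' hWm.neg.aestronglyMeasurable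
      hAm.neg.aestronglyMeasurable]
    simp only [mgf, Pi.neg_apply, mul_neg, neg_mul]
  rw [hφ, ← integral_measureReal_gammaMeasure_natCast_Iio (hWm.add hAm).aemeasurable
    (ae_of_all _ fun ω => add_nonneg (hWnn ω) (hAnn ω)) hn hμ, ← hB,
    ← hBWA.measureReal_lt_eq_integral hBm.aemeasurable (hWm.add hAm).aemeasurable]
  rfl
end

section
/- In the coupled alternating and non-alternating systems driven by the same sequences {A_i}, {B_i} and identical initial state, the departure times satisfy D^A_i ≥ D^{NA}_i and the service-availability times satisfy H^A_i ≥ H^{NA}_i for all i ≥ 1, where in the alternating system D^A_i = H^A_{i-1} + A_i and H^A_i = max(D^A_i, D^A_{i-1} + B_i), while in the non-alternating system D^{NA}_i = min(H^{NA}_{i-1}, D^{NA}_{i-1} + B_i) + A_i and H^{NA}_i = max(D^{NA}_i, max(H^{NA}_{i-1}, D^{NA}_{i-1} + B_i)), with initial conditions D^A_1 = D^{NA}_1 = A_1 and H^A_1 = H^{NA}_1 = max(A_1, B_1). -/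
/-! The two systems are compared one customer at a time. The non-alternating server starts
the next service no later than the alternating one (a minimum of `H` and `D + B` against `H`),
so its departures come first. For the availability times, the only term of the non-alternating
maximum without an obvious counterpart is `H^{NA}_{i-1}`, and it is dominated by
`H^A_{i-1} ≤ H^A_{i-1} + A_i = D^A_i` since service times are nonnegative. -/

theorem min_add_le_of_le {h h' x a : ℝ} (hh : h ≤ h') : min h x + a ≤ h' + a := by
  have := min_le_left h x
  linarith

theorem max_min_add_le_of_le {d d' h h' a b : ℝ} (ha : 0 ≤ a) (hd : d ≤ d') (hh : h ≤ h') :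
    max (min h (d + b) + a) (max h (d + b)) ≤ max (h' + a) (d' + b) := by
  have hdep : min h (d + b) + a ≤ h' + a := min_add_le_of_le hh
  have hprev : h ≤ h' + a := by linarith
  have hprep : d + b ≤ d' + b := by linarith
  exact max_le (le_max_of_le_left hdep)
    (max_le (le_max_of_le_left hprev) (le_max_of_le_right hprep))

theorem coupled_departure_times_ordered_general
    (A B : ℕ → ℝ) (hA : ∀ i, 0 ≤ A i)
    (DA HA DN HN : ℕ → ℝ)
    (hDA1 : DA 1 = A 1) (hDN1 : DN 1 = A 1)
    (hHA1 : HA 1 = max (A 1) (B 1)) (hHN1 : HN 1 = max (A 1) (B 1))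
    (hDA : ∀ i, 2 ≤ i → DA i = HA (i - 1) + A i)
    (hHA : ∀ i, 2 ≤ i → HA i = max (DA i) (DA (i - 1) + B i))
    (hDN : ∀ i, 2 ≤ i → DN i = min (HN (i - 1)) (DN (i - 1) + B i) + A i)
    (hHN : ∀ i, 2 ≤ i → HN i = max (DN i) (max (HN (i - 1)) (DN (i - 1) + B i))) :
    ∀ i, 1 ≤ i → DN i ≤ DA i ∧ HN i ≤ HA i := by
  intro i hi
  induction i, hi using Nat.le_induction with
  | base => exact ⟨(hDN1.trans hDA1.symm).le, (hHN1.trans hHA1.symm).le⟩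
  | succ n hn ih =>
    have hn2 : 2 ≤ n + 1 := by omega
    have hDN' := hDN (n + 1) hn2
    have hHN' := hHN (n + 1) hn2
    have hDA' := hDA (n + 1) hn2
    have hHA' := hHA (n + 1) hn2
    simp only [Nat.add_sub_cancel] at hDN' hHN' hDA' hHA'
    refine ⟨?_, ?_⟩
    · rw [hDN', hDA']
      exact min_add_le_of_le ih.2
    · rw [hHN', hHA', hDN', hDA']
      exact max_min_add_le_of_le (hA (n + 1)) ih.1 ih.2

/-- Lemma 1 (sample-path coupling): with the same realized service times `A_i` and
preparation times `B_i` and the same initial state, the departure times and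
service-availability times of the alternating system dominate those of the
non-alternating system: `D^A_i ≥ D^{NA}_i` and `H^A_i ≥ H^{NA}_i` for all `i ≥ 1`. -/
theorem coupled_departure_times_ordered
    (A B : ℕ → ℝ) (hA : ∀ i, 0 ≤ A i) (hB : ∀ i, 0 ≤ B i)
    (DA HA DN HN : ℕ → ℝ)
    (hDA1 : DA 1 = A 1) (hDN1 : DN 1 = A 1)
    (hHA1 : HA 1 = max (A 1) (B 1)) (hHN1 : HN 1 = max (A 1) (B 1))
    (hDA : ∀ i, 2 ≤ i → DA i = HA (i - 1) + A i)
    (hHA : ∀ i, 2 ≤ i → HA i = max (DA i) (DA (i - 1) + B i))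
    (hDN : ∀ i, 2 ≤ i → DN i = min (HN (i - 1)) (DN (i - 1) + B i) + A i)
    (hHN : ∀ i, 2 ≤ i → HN i = max (DN i) (max (HN (i - 1)) (DN (i - 1) + B i))) :
    ∀ i, 1 ≤ i → DN i ≤ DA i ∧ HN i ≤ HA i :=
  coupled_departure_times_ordered_general A B hA DA HA DN HN hDA1 hDN1 hHA1 hHN1 hDA hHA hDN hHN
end

section
/- Under the coupling of Lemma 1, the throughputs satisfy θ^A = lim_{i→∞} i/D^A_i ≤ lim_{i→∞} i/D^{NA}_i = θ^{NA} whenever the limits exist, and consequently the stationary mean waiting times satisfy E[W^A] ≥ E[W^{NA}], since θ = 1/(E[W] + E[A]) in both systems. -/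
open Filter

/-! Pathwise, `D^{NA}_i ≤ D^A_i` gives `i / D^A_i ≤ i / D^{NA}_i`, and limits preserve the
inequality. The relation `θ⁻¹ = E[W] + E[A]`, with the same `E[A]` in both systems, turns the
smaller throughput into the larger mean waiting time. -/

theorem tendsto_div_le_of_eventually_le {α : Type*} {l : Filter α} [l.NeBot]
    {n a b : α → ℝ} {x y : ℝ}
    (hx : Tendsto (fun i => n i / a i) l (nhds x))
    (hy : Tendsto (fun i => n i / b i) l (nhds y))
    (hn : ∀ᶠ i in l, 0 ≤ n i) (hb : ∀ᶠ i in l, 0 < b i) (hba : ∀ᶠ i in l, b i ≤ a i) :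
    x ≤ y :=
  le_of_tendsto_of_tendsto hx hy <| by
    filter_upwards [hn, hb, hba] with i hni hbi hbai
    exact div_le_div_of_nonneg_left hni hbi hbai

theorem le_of_mul_add_eq_one {θ θ' w w' c : ℝ} (hθ : 0 < θ) (hθθ' : θ ≤ θ')
    (h : θ * (w + c) = 1) (h' : θ' * (w' + c) = 1) : w' ≤ w := by
  have hθ' : 0 < θ' := hθ.trans_le hθθ'
  have hw : w + c = 1 / θ := by rw [eq_div_iff hθ.ne']; linarith
  have hw' : w' + c = 1 / θ' := by rw [eq_div_iff hθ'.ne']; linarith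
  have : 1 / θ' ≤ 1 / θ := one_div_le_one_div_of_le hθ hθθ'
  linarith

/-- Under the coupling of Lemma 1 (so that `D^{NA}_i ≤ D^A_i` for all `i`), the throughputs
`θ = lim i/D_i` satisfy `θ^A ≤ θ^{NA}` whenever the limits exist; consequently, since
`θ·(E[W] + E[A]) = 1` in both systems, the mean waiting times satisfy
`E[W^{NA}] ≤ E[W^A]`. -/
theorem throughput_ordered_and_mean_waiting_times_ordered
    (DA DN : ℕ → ℝ)
    (hle : ∀ i, DN i ≤ DA i)
    (hpos : ∀ i, 1 ≤ i → 0 < DN i)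
    (θA θN EWA EWN EA : ℝ)
    (hθA : Tendsto (fun i : ℕ => (i : ℝ) / DA i) atTop (nhds θA))
    (hθN : Tendsto (fun i : ℕ => (i : ℝ) / DN i) atTop (nhds θN))
    (hθApos : 0 < θA)
    (hA : θA * (EWA + EA) = 1)
    (hN : θN * (EWN + EA) = 1) :
    θA ≤ θN ∧ EWN ≤ EWA := by
  have hθ : θA ≤ θN :=
    tendsto_div_le_of_eventually_le hθA hθN (Eventually.of_forall fun i => i.cast_nonneg)
      ((eventually_ge_atTop 1).mono hpos) (Eventually.of_forall hle)
  exact ⟨hθ, le_of_mul_add_eq_one hθApos hθ hA hN⟩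
end
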